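/- Let V : ℝⁿ → ℝⁿ be twice continuously differentiable and let u(x) = c − ‖x‖²/(2n) for a real constant c (so ∇u(x) = −x/n, Hess u ≡ −(1/n)I and Δu ≡ −1). Define the vector field W(x) = (div V(x))·∇u(x) − D_V(x)ᵀ·∇u(x) − D_V(x)·∇u(x), where D_V(x) is the Jacobian matrix of V at x. Then for every x ∈ ℝⁿ: Δ(y ↦ V(y)·∇u(y))(x) + div W(x) + div V(x) = 0. (This is the interior computation showing that the shape derivative u′ of the Robin torsion function on a ball is harmonic.) -/

import Mathlib

open MeasureTheory Metric
open scoped RealInnerProductSpace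

/-- The Laplacian of `f : ℝⁿ → ℝ` at `x`, defined as the sum of the pure second
directional derivatives along the standard basis vectors of `EuclideanSpace ℝ (Fin n)`. -/
noncomputable def laplacian {n : ℕ} (f : EuclideanSpace ℝ (Fin n) → ℝ)
    (x : EuclideanSpace ℝ (Fin n)) : ℝ :=
  ∑ i : Fin n,
    fderiv ℝ (fun y => fderiv ℝ f y (EuclideanSpace.single i 1)) x (EuclideanSpace.single i 1)

/-- The divergence of a vector field `F : ℝⁿ → ℝⁿ` at `x`: the trace of its Jacobian,
computed as `∑ i ⟪D_F(x) eᵢ, eᵢ⟫` over the standard basis. -/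
noncomputable def diverg {n : ℕ} (F : EuclideanSpace ℝ (Fin n) → EuclideanSpace ℝ (Fin n))
    (x : EuclideanSpace ℝ (Fin n)) : ℝ :=
  ∑ i : Fin n, ⟪fderiv ℝ F x (EuclideanSpace.single i 1), EuclideanSpace.single i 1⟫

/-!
With `∇u(y) = -y/n`, the middle term of `W` is `D_V(y)ᵀ ∇u(y) = -(∇φ(y) - V(y))/n` for
`φ(y) = ⟪V(y), y⟫`, so `div W = -(div((div V) y) - div(D_V(y) y) + div V - Δφ)/n`, whose
`Δφ/n` cancels the Laplacian term `Δ(V·∇u) = -Δφ/n`. The fields `(div V) y` and `D_V(y) y` have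
divergences `n div V + ∇(div V)·x` and `div V + ∇(div V)·x`, the latter by the symmetry of `D²V`,
so the rest of `div W` is `-div V`.
-/

local notation "𝐞" i:max => EuclideanSpace.single i (1 : ℝ)

theorem hasGradientAt_const_sub_norm_sq_div {F : Type*} [NormedAddCommGroup F]
    [InnerProductSpace ℝ F] [CompleteSpace F] (c a : ℝ) (x : F) :
    HasGradientAt (fun y => c - ‖y‖ ^ 2 / (2 * a)) (-a⁻¹ • x) x := by
  rw [hasGradientAt_iff_hasFDerivAt]
  have h := ((hasStrictFDerivAt_norm_sq x).hasFDerivAt.mul_const (2 * a)⁻¹).const_sub c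
  simp only [← div_eq_mul_inv] at h
  refine h.congr_fderiv ?_
  ext v
  simp only [mul_inv_rev, neg_apply, smul_apply, coe_innerSL_apply, nsmul_eq_mul, Nat.cast_ofNat,
    smul_eq_mul, neg_smul, map_neg, map_smul, InnerProductSpace.toDual_apply_apply, neg_inj]
  ring

theorem gradient_inner_self {F : Type*} [NormedAddCommGroup F]
    [InnerProductSpace ℝ F] [CompleteSpace F] {V : F → F} {x : F} (hV : DifferentiableAt ℝ V x) :
    gradient (fun y => ⟪V y, y⟫) x = ContinuousLinearMap.adjoint (fderiv ℝ V x) x + V x := by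
  refine ext_inner_right ℝ fun v => ?_
  rw [inner_gradient_left, fderiv_inner_apply ℝ hV differentiableAt_fun_id, inner_add_left,
    ContinuousLinearMap.adjoint_inner_left, fderiv_fun_id, ContinuousLinearMap.id_apply,
    real_inner_comm x]
  ring

section
variable {ι : Type*} [Fintype ι]

theorem map_eq_sum_inner_single_smul {M F : Type*} [AddCommGroup M] [Module ℝ M]
    [FunLike F (EuclideanSpace ℝ ι) M] [LinearMapClass F ℝ (EuclideanSpace ℝ ι) M]
    [DecidableEq ι] (L : F) (x : EuclideanSpace ℝ ι) :
    L x = ∑ i, ⟪x, 𝐞 i⟫ • L (𝐞 i) := by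
  conv_lhs => rw [← (EuclideanSpace.basisFun ι ℝ).sum_repr' x]
  simp [real_inner_comm]

theorem differentiableAt_gradient {f : EuclideanSpace ℝ ι → ℝ} {x : EuclideanSpace ℝ ι}
    (hf : DifferentiableAt ℝ (fderiv ℝ f) x) : DifferentiableAt ℝ (gradient f) x := by
  classical
  rw [differentiableAt_euclidean]
  intro i
  have hcoord : (fun y => gradient f y i) = fun y => fderiv ℝ f y (𝐞 i) := by
    funext y
    rw [← inner_gradient_left, EuclideanSpace.inner_single_right]
    simp
  rw [hcoord]
  exact hf.clm_apply (differentiableAt_const _)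

end

section
variable {n : ℕ} {x : EuclideanSpace ℝ (Fin n)}

theorem laplacian_const_mul (c : ℝ) (f : EuclideanSpace ℝ (Fin n) → ℝ) :
    laplacian (fun y => c * f y) x = c * laplacian f x := by
  have hf : fderiv ℝ (fun y => c * f y) = c • fderiv ℝ f := fderiv_const_smul_field (f := f) c
  have hf' (v) : fderiv ℝ (fun y => c * fderiv ℝ f y v) = c • fderiv ℝ (fun y => fderiv ℝ f y v) :=
    fderiv_const_smul_field (f := fun y => fderiv ℝ f y v) c
  simp only [laplacian, hf, Pi.smul_apply, smul_apply, smul_eq_mul, hf', Finset.mul_sum]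

theorem diverg_const_smul (c : ℝ) (F : EuclideanSpace ℝ (Fin n) → EuclideanSpace ℝ (Fin n)) :
    diverg (fun y => c • F y) x = c * diverg F x := by
  have h : fderiv ℝ (fun y => c • F y) = c • fderiv ℝ F := fderiv_const_smul_field (f := F) c
  simp only [diverg, h, Pi.smul_apply, smul_apply, real_inner_smul_left, Finset.mul_sum]

theorem diverg_add {F G : EuclideanSpace ℝ (Fin n) → EuclideanSpace ℝ (Fin n)}
    (hF : DifferentiableAt ℝ F x) (hG : DifferentiableAt ℝ G x) :
    diverg (fun y => F y + G y) x = diverg F x + diverg G x := by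
  simp only [diverg, fderiv_fun_add hF hG, add_apply, inner_add_left, Finset.sum_add_distrib]

theorem diverg_sub {F G : EuclideanSpace ℝ (Fin n) → EuclideanSpace ℝ (Fin n)}
    (hF : DifferentiableAt ℝ F x) (hG : DifferentiableAt ℝ G x) :
    diverg (fun y => F y - G y) x = diverg F x - diverg G x := by
  simp only [diverg, fderiv_fun_sub hF hG, sub_apply, inner_sub_left, Finset.sum_sub_distrib]

theorem diverg_gradient {f : EuclideanSpace ℝ (Fin n) → ℝ}
    (hf : DifferentiableAt ℝ (fderiv ℝ f) x) : diverg (gradient f) x = laplacian f x := by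
  refine Finset.sum_congr rfl fun i _ => ?_
  have hcoord : (fun y => ⟪gradient f y, 𝐞 i⟫) = fun y => fderiv ℝ f y (𝐞 i) :=
    funext fun y => inner_gradient_left
  rw [← hcoord, fderiv_inner_apply ℝ (differentiableAt_gradient hf) (differentiableAt_const _)]
  simp

theorem diverg_smul_self {g : EuclideanSpace ℝ (Fin n) → ℝ} (hg : DifferentiableAt ℝ g x) :
    diverg (fun y => g y • y) x = n * g x + fderiv ℝ g x x := by
  have h : HasFDerivAt (fun y => g y • y) _ x := hg.hasFDerivAt.smul (hasFDerivAt_id x)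
  rw [diverg, h.fderiv, map_eq_sum_inner_single_smul (fderiv ℝ g x) x]
  simp [inner_add_left, real_inner_smul_left, Finset.sum_add_distrib, mul_comm]

theorem differentiableAt_diverg {V : EuclideanSpace ℝ (Fin n) → EuclideanSpace ℝ (Fin n)}
    (hV : DifferentiableAt ℝ (fderiv ℝ V) x) : DifferentiableAt ℝ (diverg V) x :=
  DifferentiableAt.fun_sum fun _ _ =>
    (hV.clm_apply (differentiableAt_const _)).inner ℝ (differentiableAt_const _)

theorem fderiv_diverg_apply {V : EuclideanSpace ℝ (Fin n) → EuclideanSpace ℝ (Fin n)}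
    (hV : DifferentiableAt ℝ (fderiv ℝ V) x) (v : EuclideanSpace ℝ (Fin n)) :
    fderiv ℝ (diverg V) x v = ∑ i, ⟪fderiv ℝ (fderiv ℝ V) x v (𝐞 i), 𝐞 i⟫ := by
  unfold diverg
  rw [fderiv_fun_sum (fun i _ =>
    (hV.clm_apply (differentiableAt_const _)).inner ℝ (differentiableAt_const _))]
  simp [fderiv_inner_apply ℝ (hV.clm_apply (differentiableAt_const _)) (differentiableAt_const _),
    fderiv_clm_apply hV (differentiableAt_const _)]

theorem diverg_fderiv_apply_self {V : EuclideanSpace ℝ (Fin n) → EuclideanSpace ℝ (Fin n)}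
    (hV : ContDiffAt ℝ 2 V x) :
    diverg (fun y => fderiv ℝ V y y) x = diverg V x + fderiv ℝ (diverg V) x x := by
  have hV' : DifferentiableAt ℝ (fderiv ℝ V) x :=
    (hV.fderiv_right (m := 1) (by norm_num)).differentiableAt (by norm_num)
  have hsymm := hV.isSymmSndFDerivAt (by simp)
  have h : HasFDerivAt (fun y => fderiv ℝ V y y) _ x := hV'.hasFDerivAt.clm_apply (hasFDerivAt_id x)
  rw [diverg, h.fderiv, fderiv_diverg_apply hV']
  simp [inner_add_left, Finset.sum_add_distrib, hsymm _ x, diverg]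

theorem diverg_diverg_smul_self_sub_fderiv_apply_self
    {V : EuclideanSpace ℝ (Fin n) → EuclideanSpace ℝ (Fin n)} (hV : ContDiffAt ℝ 2 V x) :
    diverg (fun y => diverg V y • y - fderiv ℝ V y y) x = (n - 1) * diverg V x := by
  have hV' : DifferentiableAt ℝ (fderiv ℝ V) x :=
    (hV.fderiv_right (m := 1) (by norm_num)).differentiableAt (by norm_num)
  have hdiv := differentiableAt_diverg hV'
  rw [diverg_sub (by fun_prop) (by fun_prop), diverg_smul_self hdiv, diverg_fderiv_apply_self hV]
  ring

end

/-- Interior computation for the harmonicity of the shape derivative of the Robin torsion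
function of a ball: for `u(x) = c − ‖x‖²/(2n)` (so `∇u(x) = −x/n`, `Hess u ≡ −(1/n)I`,
`Δu ≡ −1`), a `C²` vector field `V`, and the auxiliary field
`W = (div V)∇u − D_Vᵀ∇u − D_V∇u`, one has `Δ(V·∇u) + div W + div V = 0` everywhere. -/
theorem shape_derivative_interior_equation (n : ℕ) (hn : 2 ≤ n) (c : ℝ)
    (V : EuclideanSpace ℝ (Fin n) → EuclideanSpace ℝ (Fin n)) (hV : ContDiff ℝ 2 V)
    (u : EuclideanSpace ℝ (Fin n) → ℝ) (hu : ∀ x, u x = c - ‖x‖ ^ 2 / (2 * n))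
    (W : EuclideanSpace ℝ (Fin n) → EuclideanSpace ℝ (Fin n))
    (hW : ∀ x, W x = (diverg V x) • gradient u x
      - ContinuousLinearMap.adjoint (fderiv ℝ V x) (gradient u x)
      - fderiv ℝ V x (gradient u x)) :
    ∀ x, laplacian (fun y => ⟪V y, gradient u y⟫) x + diverg W x + diverg V x = 0 := by
  intro x
  have hn0 : (n : ℝ) ≠ 0 := Nat.cast_ne_zero.mpr (by omega)
  have hgrad : gradient u = fun y => -(n : ℝ)⁻¹ • y := by
    funext y
    rw [funext hu]
    exact (hasGradientAt_const_sub_norm_sq_div c n y).gradient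
  set φ := fun y => ⟪V y, y⟫
  have hVd : Differentiable ℝ V := hV.differentiable (by norm_num)
  have hV' : DifferentiableAt ℝ (fderiv ℝ V) x :=
    (hV.fderiv_right (m := 1) (by norm_num)).differentiable (by norm_num) x
  have hφ' : DifferentiableAt ℝ (fderiv ℝ φ) x :=
    ((hV.inner ℝ contDiff_id).fderiv_right (m := 1) (by norm_num)).differentiable (by norm_num) x
  have hVu : (fun y => ⟪V y, gradient u y⟫) = fun y => -(n : ℝ)⁻¹ * φ y := by
    funext y
    simp [φ, hgrad, real_inner_smul_right]
  have hW' : W = fun y => -(n : ℝ)⁻¹ •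
      ((diverg V y • y - fderiv ℝ V y y) + (V y - gradient φ y)) := by
    funext y
    rw [hW, hgrad, gradient_inner_self (hVd y)]
    simp only [map_smul]
    module
  have hdiv := differentiableAt_diverg hV'
  have hgradφ := differentiableAt_gradient hφ'
  rw [hVu, hW', laplacian_const_mul, diverg_const_smul, diverg_add,
    diverg_diverg_smul_self_sub_fderiv_apply_self hV.contDiffAt, diverg_sub, diverg_gradient hφ']
  · field_simp
    ring
  all_goals fun_prop
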